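/- arXiv:2206.11034 — 3 statements merged into one kernel-verified Lean document; each statement's English description precedes it below -/
import Mathlib

section
/- Let Γ* : G → ℝ² be a minimal network and let Γ : G → ℝ² be an immersed triple junctions network with the same underlying graph G such that Γ(q) = Γ*(q) for every endpoint q of G. Then L(Γ*) ≤ L(Γ). -/
/-!
A calibration argument. Each edge of the minimal network `Γ*` is an immersed curve inside a
segment, hence traverses it monotonically with a constant unit tangent `τᵢ`, and
`L(Γ*) = ∑ᵢ ⟪τᵢ, Γ*(1,i) - Γ*(0,i)⟫`. Regrouping this sum by vertices, the inner tangents at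
each junction sum to zero, so only the endpoint positions survive, and these are shared by `Γ`.
Hence `L(Γ*) = ∑ᵢ ⟪τᵢ, Γ(1,i) - Γ(0,i)⟫ ≤ ∑ᵢ ‖Γ(1,i) - Γ(0,i)‖ ≤ L(Γ)`.
-/

open Set

noncomputable section

/-- The Euclidean plane `ℝ²`. -/
abbrev Plane : Type := EuclideanSpace ℝ (Fin 2)

/-- A topological graph on `N` edges: the quotient of `E = ⊔_{i=1}^N [0,1] × {i}` by an
equivalence relation that only identifies points of `V = ⊔_{i=1}^N {0,1} × {i}`, required
to be connected. -/
structure TopGraph (N : ℕ) where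
  rel : Setoid (unitInterval × Fin N)
  rel_vertices : ∀ x y : unitInterval × Fin N, rel.r x y → x = y ∨
    ((x.1 = 0 ∨ x.1 = 1) ∧ (y.1 = 0 ∨ y.1 = 1))
  connected : ConnectedSpace (Quotient rel)

namespace TopGraph

variable {N : ℕ}

/-- The underlying topological space of the graph. -/
abbrev space (G : TopGraph N) : Type := Quotient G.rel

/-- The canonical projection from the disjoint union of edges onto the graph. -/
def proj (G : TopGraph N) (x : unitInterval × Fin N) : G.space := Quotient.mk G.rel x

/-- The preimage (fiber) of a point of the graph under the projection. -/
def fiber (G : TopGraph N) (p : G.space) : Set (unitInterval × Fin N) := {x | G.proj x = p}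

/-- A point of `E` lying in `V`, i.e. an endpoint label of some edge. -/
def IsVertexPoint (x : unitInterval × Fin N) : Prop := x.1 = 0 ∨ x.1 = 1

/-- An endpoint of the graph: a point whose preimage lies in `V` and is a singleton. -/
def IsEndpoint (G : TopGraph N) (p : G.space) : Prop :=
  (∀ x ∈ G.fiber p, IsVertexPoint x) ∧ (G.fiber p).ncard = 1

/-- A junction of the graph: a point whose preimage lies in `V` and has at least two
elements. -/
def IsJunction (G : TopGraph N) (p : G.space) : Prop :=
  (∀ x ∈ G.fiber p, IsVertexPoint x) ∧ 2 ≤ (G.fiber p).ncard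

/-- The order of a junction: the cardinality of its preimage. -/
def order (G : TopGraph N) (p : G.space) : ℕ := (G.fiber p).ncard

/-- A subgraph of `G`: a subspace consisting of (the image in `G` of) a subset of whole
edges, with the identifications induced by `G`. -/
def IsSubgraph (G : TopGraph N) (S : Set G.space) : Prop :=
  ∃ E' : Set (Fin N), S = G.proj '' {x | x.2 ∈ E'}

end TopGraph

/-- A (C¹ immersed) network: a continuous map `Γ : G → ℝ²` whose restriction to each edge
`[0,1] × {i}` is a C¹ immersion (recorded via a map `edge i : ℝ → ℝ²` which agrees with
`Γ` on the edge, is C¹ on `[0,1]` and has nonvanishing derivative there). -/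
structure Network (N : ℕ) (G : TopGraph N) where
  toFun : G.space → Plane
  continuous_toFun : Continuous toFun
  edge : Fin N → ℝ → Plane
  edge_eq : ∀ (i : Fin N) (t : unitInterval), edge i (t : ℝ) = toFun (G.proj (t, i))
  edge_smooth : ∀ i, ContDiffOn ℝ 1 (edge i) (Icc (0:ℝ) 1)
  edge_immersed : ∀ i, ∀ t ∈ Icc (0:ℝ) 1, derivWithin (edge i) (Icc (0:ℝ) 1) t ≠ 0

namespace Network

variable {N : ℕ} {G : TopGraph N}

/-- The length of a network: the sum of the lengths (total variations) of its edge maps. -/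
def length (Γ : Network N G) : ℝ :=
  ∑ i : Fin N, (eVariationOn (Γ.edge i) (Icc (0:ℝ) 1)).toReal

/-- The inner tangent vector of the edge `x.2` at the endpoint label `x.1 ∈ {0,1}`:
`(-1)^e γ'(e)/|γ'(e)|`. -/
def innerTangent (Γ : Network N G) (x : unitInterval × Fin N) : Plane :=
  if (x.1 : ℝ) = 0 then
    ‖derivWithin (Γ.edge x.2) (Icc (0:ℝ) 1) 0‖⁻¹ • derivWithin (Γ.edge x.2) (Icc (0:ℝ) 1) 0
  else
    -(‖derivWithin (Γ.edge x.2) (Icc (0:ℝ) 1) 1‖⁻¹ • derivWithin (Γ.edge x.2) (Icc (0:ℝ) 1) 1)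

/-- A minimal network: every edge is an embedding parametrizing a nondegenerate straight
segment, distinct edges intersect only at identified endpoints, the two endpoint labels
of each edge are not identified with each other, every junction has order `3`, and at
every junction the inner tangent vectors sum to zero. -/
structure IsMinimal (Γ : Network N G) : Prop where
  straight : ∀ i, ∃ p q : Plane, p ≠ q ∧ Γ.edge i '' (Icc (0:ℝ) 1) = segment ℝ p q
  embed : ∀ i, Set.InjOn (Γ.edge i) (Icc (0:ℝ) 1)
  intersect_only_at_identified_endpoints : ∀ i j, i ≠ j → ∀ s t : unitInterval,
    Γ.edge i (s : ℝ) = Γ.edge j (t : ℝ) → G.proj (s, i) = G.proj (t, j)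
  ends_distinct : ∀ i, G.proj (0, i) ≠ G.proj (1, i)
  junctions_order_three : ∀ p, G.IsJunction p → G.order p = 3
  balanced : ∀ p, G.IsJunction p → (∑ᶠ x ∈ G.fiber p, Γ.innerTangent x) = 0

end Network

open scoped RealInnerProductSpace

section Curves

variable {E : Type*} [NormedAddCommGroup E] [InnerProductSpace ℝ E]

theorem exists_norm_eq_one_forall_mem_segment_eq {p q : E} (hpq : p ≠ q) :
    ∃ u : E, ‖u‖ = 1 ∧ ∀ x ∈ segment ℝ p q, x = p + ⟪u, x - p⟫ • u := by
  have hw : ‖q - p‖ ≠ 0 := norm_ne_zero_iff.2 (sub_ne_zero.2 hpq.symm)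
  refine ⟨‖q - p‖⁻¹ • (q - p), by rw [norm_smul, norm_inv, norm_norm, inv_mul_cancel₀ hw], ?_⟩
  rw [segment_eq_image']
  rintro _ ⟨θ, -, rfl⟩
  rw [add_sub_cancel_left, real_inner_smul_left, real_inner_smul_right,
    real_inner_self_eq_norm_sq, smul_smul]
  congr 2
  field_simp

theorem IsPreconnected.forall_pos_or_forall_neg {s : Set ℝ} {f : ℝ → ℝ} (hs : IsPreconnected s)
    (hf : ContinuousOn f s) (hf0 : ∀ x ∈ s, f x ≠ 0) :
    (∀ x ∈ s, 0 < f x) ∨ ∀ x ∈ s, f x < 0 := by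
  by_contra! ⟨⟨x, hx, hfx⟩, y, hy, hfy⟩
  obtain ⟨z, hz, hfz⟩ := hs.intermediate_value hx hy hf ⟨hfx, hfy⟩
  exact hf0 z hz hfz

variable {γ : ℝ → E} {a b : ℝ} {p u : E}

theorem ContDiffOn.boundedVariationOn_Icc (hab : a ≤ b) (hγ : ContDiffOn ℝ 1 γ (Icc a b)) :
    BoundedVariationOn γ (Icc a b) := by
  obtain ⟨K, hK⟩ := hγ.exists_lipschitzOnWith one_ne_zero (convex_Icc a b) isCompact_Icc
  simpa using hK.locallyBoundedVariationOn a b ⟨le_rfl, hab⟩ ⟨hab, le_rfl⟩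

theorem derivWithin_eq_inner_smul_of_mem_line (hab : a < b) (hγ : DifferentiableOn ℝ γ (Icc a b))
    (hline : ∀ t ∈ Icc a b, γ t = p + ⟪u, γ t - p⟫ • u) {t : ℝ} (ht : t ∈ Icc a b) :
    derivWithin γ (Icc a b) t = ⟪u, derivWithin γ (Icc a b) t⟫ • u := by
  have hγt := (hγ t ht).hasDerivWithinAt
  have hcoord : HasDerivWithinAt (fun s => ⟪u, γ s - p⟫) ⟪u, derivWithin γ (Icc a b) t⟫
      (Icc a b) t := by
    simpa using (hasDerivWithinAt_const t _ u).inner ℝ (hγt.sub_const p)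
  exact ((hcoord.smul_const u).const_add p |>.congr_of_mem hline ht).derivWithin
    (uniqueDiffOn_Icc hab t ht)

theorem lipschitzWith_add_smul (hu : ‖u‖ = 1) : LipschitzWith 1 fun r : ℝ => p + r • u :=
  LipschitzWith.of_dist_le_mul fun r s => by
    simp [dist_eq_norm, ← sub_smul, norm_smul, hu]

theorem eVariationOn_toReal_le_inner_of_mem_line (hab : a < b) (hu : ‖u‖ = 1)
    (hγ : DifferentiableOn ℝ γ (Icc a b))
    (hline : ∀ t ∈ Icc a b, γ t = p + ⟪u, γ t - p⟫ • u)
    (hpos : ∀ t ∈ Icc a b, 0 < ⟪u, derivWithin γ (Icc a b) t⟫) :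
    (eVariationOn γ (Icc a b)).toReal ≤ ⟪u, γ b - γ a⟫ := by
  set g : ℝ → ℝ := fun t => ⟪u, γ t - p⟫
  have hg : MonotoneOn g (Icc a b) := by
    refine monotoneOn_of_hasDerivWithinAt_nonneg (convex_Icc a b)
      (continuousOn_const.inner (hγ.continuousOn.sub continuousOn_const))
      (f' := fun t => ⟪u, derivWithin γ (Icc a b) t⟫) (fun t ht => ?_)
      (fun t ht => (hpos t (interior_subset ht)).le)
    have hγt := ((hγ t (interior_subset ht)).hasDerivWithinAt).mono interior_subset
    simpa using (hasDerivWithinAt_const t _ u).inner ℝ (hγt.sub_const p)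
  have hab' : a ∈ Icc a b := ⟨le_rfl, hab.le⟩
  have hba' : b ∈ Icc a b := ⟨hab.le, le_rfl⟩
  have hvar : eVariationOn γ (Icc a b) ≤ ENNReal.ofReal (g b - g a) :=
    calc eVariationOn γ (Icc a b) = eVariationOn ((fun r : ℝ => p + r • u) ∘ g) (Icc a b) :=
          eVariationOn.congr hline
      _ ≤ 1 * eVariationOn g (Icc a b) :=
          (lipschitzWith_add_smul hu).lipschitzOnWith.comp_eVariationOn_le (mapsTo_univ _ _)
      _ ≤ ENNReal.ofReal (g b - g a) := by
          simpa using (hg.eVariationOn_eq hab' hba').le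
  calc (eVariationOn γ (Icc a b)).toReal ≤ g b - g a :=
        ENNReal.toReal_le_of_le_ofReal (sub_nonneg.2 (hg hab' hba' hab.le)) hvar
    _ = ⟪u, γ b - γ a⟫ := by simp only [g, ← inner_sub_right, sub_sub_sub_cancel_right]

theorem inv_norm_smul_derivWithin_eq_of_mem_line (hab : a < b) (hu : ‖u‖ = 1)
    (hγ : DifferentiableOn ℝ γ (Icc a b))
    (hline : ∀ t ∈ Icc a b, γ t = p + ⟪u, γ t - p⟫ • u) {t : ℝ} (ht : t ∈ Icc a b)
    (hpos : 0 < ⟪u, derivWithin γ (Icc a b) t⟫) :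
    ‖derivWithin γ (Icc a b) t‖⁻¹ • derivWithin γ (Icc a b) t = u := by
  rw [derivWithin_eq_inner_smul_of_mem_line hab hγ hline ht, norm_smul, hu, mul_one,
    Real.norm_of_nonneg hpos.le, smul_smul, inv_mul_cancel₀ hpos.ne', one_smul]

theorem exists_unit_direction_of_image_subset_segment {q : E} (hab : a < b)
    (hγ : ContDiffOn ℝ 1 γ (Icc a b)) (himm : ∀ t ∈ Icc a b, derivWithin γ (Icc a b) t ≠ 0)
    (hpq : p ≠ q) (hseg : γ '' Icc a b ⊆ segment ℝ p q) :
    ∃ u : E, ‖u‖ = 1 ∧ (∀ t ∈ Icc a b, γ t = p + ⟪u, γ t - p⟫ • u) ∧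
      ∀ t ∈ Icc a b, 0 < ⟪u, derivWithin γ (Icc a b) t⟫ := by
  obtain ⟨u, hu, hsegu⟩ := exists_norm_eq_one_forall_mem_segment_eq hpq
  have hline : ∀ t ∈ Icc a b, γ t = p + ⟪u, γ t - p⟫ • u :=
    fun t ht => hsegu _ (hseg (mem_image_of_mem γ ht))
  have hcont : ContinuousOn (fun t => ⟪u, derivWithin γ (Icc a b) t⟫) (Icc a b) :=
    continuousOn_const.inner (hγ.continuousOn_derivWithin (uniqueDiffOn_Icc hab) le_rfl)
  have hne : ∀ t ∈ Icc a b, ⟪u, derivWithin γ (Icc a b) t⟫ ≠ 0 := fun t ht h0 => himm t ht <| by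
    rw [derivWithin_eq_inner_smul_of_mem_line hab (hγ.differentiableOn one_ne_zero) hline ht,
      h0, zero_smul]
  rcases isPreconnected_Icc.forall_pos_or_forall_neg hcont hne with hpos | hneg
  · exact ⟨u, hu, hline, hpos⟩
  · refine ⟨-u, by rw [norm_neg, hu], fun t ht => ?_, fun t ht => ?_⟩
    · rw [inner_neg_left, neg_smul_neg, ← hline t ht]
    · rw [inner_neg_left, neg_pos]
      exact hneg t ht

theorem exists_unit_tangent_of_image_subset_segment {q : E} (hab : a < b)
    (hγ : ContDiffOn ℝ 1 γ (Icc a b)) (himm : ∀ t ∈ Icc a b, derivWithin γ (Icc a b) t ≠ 0)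
    (hpq : p ≠ q) (hseg : γ '' Icc a b ⊆ segment ℝ p q) :
    ∃ u : E, ‖u‖ = 1 ∧
      (∀ t ∈ Icc a b, ‖derivWithin γ (Icc a b) t‖⁻¹ • derivWithin γ (Icc a b) t = u) ∧
      (eVariationOn γ (Icc a b)).toReal ≤ ⟪u, γ b - γ a⟫ := by
  have hdiff := hγ.differentiableOn one_ne_zero
  obtain ⟨u, hu, hline, hpos⟩ :=
    exists_unit_direction_of_image_subset_segment hab hγ himm hpq hseg
  exact ⟨u, hu, fun t ht => inv_norm_smul_derivWithin_eq_of_mem_line hab hu hdiff hline ht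
    (hpos t ht), eVariationOn_toReal_le_inner_of_mem_line hab hu hdiff hline hpos⟩

end Curves

namespace TopGraph

variable {N : ℕ}

def vertexLabels (N : ℕ) : Finset (unitInterval × Fin N) := {0, 1} ×ˢ Finset.univ

theorem mem_vertexLabels {x : unitInterval × Fin N} : x ∈ vertexLabels N ↔ IsVertexPoint x := by
  simp [vertexLabels, IsVertexPoint]

theorem sum_vertexLabels {M : Type*} [AddCommMonoid M] (F : unitInterval × Fin N → M) :
    ∑ x ∈ vertexLabels N, F x = ∑ i, (F (0, i) + F (1, i)) := by
  rw [vertexLabels, Finset.sum_product_right]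
  exact Finset.sum_congr rfl fun i _ => Finset.sum_pair zero_ne_one

variable (G : TopGraph N)

theorem isVertexPoint_of_mem_fiber_proj {x y : unitInterval × Fin N} (hx : IsVertexPoint x)
    (hy : y ∈ G.fiber (G.proj x)) : IsVertexPoint y := by
  rcases G.rel_vertices _ _ (Quotient.exact hy) with rfl | ⟨hy, -⟩
  exacts [hx, hy]

open Classical in
theorem coe_filter_vertexLabels_proj_eq_fiber {x : unitInterval × Fin N}
    (hx : x ∈ vertexLabels N) :
    ↑((vertexLabels N).filter fun y => G.proj y = G.proj x) = G.fiber (G.proj x) := by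
  ext y
  simp only [Finset.coe_filter, mem_ofPred_eq, fiber, and_iff_right_iff_imp, mem_vertexLabels]
  exact fun hy => G.isVertexPoint_of_mem_fiber_proj (mem_vertexLabels.1 hx) hy

theorem isEndpoint_or_isJunction_proj {x : unitInterval × Fin N} (hx : x ∈ vertexLabels N) :
    G.IsEndpoint (G.proj x) ∨ G.IsJunction (G.proj x) := by
  have hvert : ∀ y ∈ G.fiber (G.proj x), IsVertexPoint y :=
    fun y => G.isVertexPoint_of_mem_fiber_proj (mem_vertexLabels.1 hx)
  have hpos : 0 < (G.fiber (G.proj x)).ncard := by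
    classical
    rw [← G.coe_filter_vertexLabels_proj_eq_fiber hx, ncard_coe_finset, Finset.card_pos]
    exact ⟨x, Finset.mem_filter.2 ⟨hx, rfl⟩⟩
  rcases (Nat.one_le_iff_ne_zero.2 hpos.ne').eq_or_lt with h | h
  exacts [Or.inl ⟨hvert, h.symm⟩, Or.inr ⟨hvert, h⟩]

/-- A discrete divergence theorem. -/
theorem sum_vertexLabels_inner_eq_zero {E : Type*} [NormedAddCommGroup E] [InnerProductSpace ℝ E]
    (t : unitInterval × Fin N → E) (f : G.space → E)
    (ht : ∀ p, G.IsJunction p → ∑ᶠ x ∈ G.fiber p, t x = 0)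
    (hf : ∀ q, G.IsEndpoint q → f q = 0) :
    ∑ x ∈ vertexLabels N, ⟪t x, f (G.proj x)⟫ = 0 := by
  classical
  rw [← Finset.sum_fiberwise_of_maps_to fun x hx => Finset.mem_image_of_mem G.proj hx]
  refine Finset.sum_eq_zero fun p hp => ?_
  obtain ⟨x, hx, rfl⟩ := Finset.mem_image.1 hp
  have hgroup : ∑ y ∈ vertexLabels N with G.proj y = G.proj x, ⟪t y, f (G.proj y)⟫ =
      ⟪∑ᶠ y ∈ G.fiber (G.proj x), t y, f (G.proj x)⟫ := by
    rw [← G.coe_filter_vertexLabels_proj_eq_fiber hx, finsum_mem_coe_finset, sum_inner]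
    exact Finset.sum_congr rfl fun y hy => by rw [(Finset.mem_filter.1 hy).2]
  rw [hgroup]
  rcases G.isEndpoint_or_isJunction_proj hx with hend | hjun
  · rw [hf _ hend, inner_zero_right]
  · rw [ht _ hjun, inner_zero_left]

end TopGraph

namespace Network

variable {N : ℕ} {G : TopGraph N} (Γ : Network N G)

theorem edge_zero (i : Fin N) : Γ.edge i 0 = Γ.toFun (G.proj (0, i)) := Γ.edge_eq i 0

theorem edge_one (i : Fin N) : Γ.edge i 1 = Γ.toFun (G.proj (1, i)) := Γ.edge_eq i 1

theorem innerTangent_zero (i : Fin N) :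
    Γ.innerTangent (0, i) =
      ‖derivWithin (Γ.edge i) (Icc 0 1) 0‖⁻¹ • derivWithin (Γ.edge i) (Icc 0 1) 0 :=
  if_pos rfl

theorem innerTangent_one (i : Fin N) :
    Γ.innerTangent (1, i) =
      -(‖derivWithin (Γ.edge i) (Icc 0 1) 1‖⁻¹ • derivWithin (Γ.edge i) (Icc 0 1) 1) :=
  if_neg one_ne_zero

theorem norm_innerTangent_zero (i : Fin N) : ‖Γ.innerTangent (0, i)‖ = 1 := by
  have hne := Γ.edge_immersed i 0 ⟨le_rfl, zero_le_one⟩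
  rw [innerTangent_zero, norm_smul, norm_inv, norm_norm, inv_mul_cancel₀ (norm_ne_zero_iff.2 hne)]

theorem inner_edge_sub_le_length_edge (i : Fin N) {v : Plane} (hv : ‖v‖ ≤ 1) :
    ⟪v, Γ.edge i 1 - Γ.edge i 0⟫ ≤ (eVariationOn (Γ.edge i) (Icc 0 1)).toReal :=
  calc ⟪v, Γ.edge i 1 - Γ.edge i 0⟫ ≤ ‖v‖ * ‖Γ.edge i 1 - Γ.edge i 0‖ := real_inner_le_norm _ _
    _ ≤ dist (Γ.edge i 1) (Γ.edge i 0) := by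
      rw [dist_eq_norm]
      exact mul_le_of_le_one_left (norm_nonneg _) hv
    _ ≤ (eVariationOn (Γ.edge i) (Icc 0 1)).toReal :=
      ((Γ.edge_smooth i).boundedVariationOn_Icc zero_le_one).dist_le
        ⟨zero_le_one, le_rfl⟩ ⟨le_rfl, zero_le_one⟩

theorem sum_inner_edge_sub_eq_of_eq_on_endpoints (Γ₁ Γ₂ : Network N G)
    (t : unitInterval × Fin N → Plane) (hflip : ∀ i, t (1, i) = -t (0, i))
    (hbal : ∀ p, G.IsJunction p → ∑ᶠ x ∈ G.fiber p, t x = 0)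
    (hend : ∀ q, G.IsEndpoint q → Γ₁.toFun q = Γ₂.toFun q) :
    ∑ i, ⟪t (0, i), Γ₁.edge i 1 - Γ₁.edge i 0⟫ = ∑ i, ⟪t (0, i), Γ₂.edge i 1 - Γ₂.edge i 0⟫ := by
  have hzero := G.sum_vertexLabels_inner_eq_zero t (fun p => Γ₁.toFun p - Γ₂.toFun p) hbal
    fun q hq => sub_eq_zero.2 (hend q hq)
  rw [TopGraph.sum_vertexLabels] at hzero
  rw [← sub_eq_zero, ← Finset.sum_sub_distrib, ← neg_eq_zero, ← Finset.sum_neg_distrib]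
  convert hzero using 2 with i
  simp only [hflip, edge_zero, edge_one, inner_sub_right, inner_neg_left]
  ring

namespace IsMinimal

variable {Γ}

theorem exists_innerTangent_eq (hmin : Γ.IsMinimal) (i : Fin N) :
    ∃ u : Plane, Γ.innerTangent (0, i) = u ∧ Γ.innerTangent (1, i) = -u ∧
      (eVariationOn (Γ.edge i) (Icc 0 1)).toReal ≤ ⟪u, Γ.edge i 1 - Γ.edge i 0⟫ := by
  obtain ⟨p, q, hpq, himg⟩ := hmin.straight i
  obtain ⟨u, -, htan, hlen⟩ := exists_unit_tangent_of_image_subset_segment zero_lt_one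
    (Γ.edge_smooth i) (Γ.edge_immersed i) hpq himg.subset
  refine ⟨u, ?_, ?_, hlen⟩
  · rw [innerTangent_zero, htan 0 ⟨le_rfl, zero_le_one⟩]
  · rw [innerTangent_one, htan 1 ⟨zero_le_one, le_rfl⟩]

theorem innerTangent_one_eq_neg (hmin : Γ.IsMinimal) (i : Fin N) :
    Γ.innerTangent (1, i) = -Γ.innerTangent (0, i) := by
  obtain ⟨u, h0, h1, -⟩ := hmin.exists_innerTangent_eq i
  rw [h0, h1]

theorem length_edge_le_inner (hmin : Γ.IsMinimal) (i : Fin N) :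
    (eVariationOn (Γ.edge i) (Icc 0 1)).toReal ≤
      ⟪Γ.innerTangent (0, i), Γ.edge i 1 - Γ.edge i 0⟫ := by
  obtain ⟨u, h0, -, hlen⟩ := hmin.exists_innerTangent_eq i
  rwa [h0]

end IsMinimal

end Network

theorem minimal_network_length_le_same_graph_general {N : ℕ} {G : TopGraph N}
    (Γstar : Network N G) (hmin : Γstar.IsMinimal)
    (Γ : Network N G)
    (hend : ∀ q, G.IsEndpoint q → Γ.toFun q = Γstar.toFun q) :
    Γstar.length ≤ Γ.length := by
  have hflux := Network.sum_inner_edge_sub_eq_of_eq_on_endpoints Γstar Γ Γstar.innerTangent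
    hmin.innerTangent_one_eq_neg hmin.balanced fun q hq => (hend q hq).symm
  calc Γstar.length ≤ ∑ i, ⟪Γstar.innerTangent (0, i), Γstar.edge i 1 - Γstar.edge i 0⟫ :=
        Finset.sum_le_sum fun i _ => hmin.length_edge_le_inner i
    _ = ∑ i, ⟪Γstar.innerTangent (0, i), Γ.edge i 1 - Γ.edge i 0⟫ := hflux
    _ ≤ Γ.length := Finset.sum_le_sum fun i _ =>
        Γ.inner_edge_sub_le_length_edge i (Γstar.norm_innerTangent_zero i).le

/-- A minimal network minimizes length among immersed triple junctions
networks with the same underlying graph and the same endpoints. -/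
theorem minimal_network_length_le_same_graph {N : ℕ} {G : TopGraph N}
    (Γstar : Network N G) (hmin : Γstar.IsMinimal)
    (Γ : Network N G)
    (htriple : ∀ p, G.IsJunction p → G.order p = 3)
    (hend : ∀ q, G.IsEndpoint q → Γ.toFun q = Γstar.toFun q) :
    Γstar.length ≤ Γ.length :=
  minimal_network_length_le_same_graph_general Γstar hmin Γ hend
end
end

section
/- There is no minimal network Γ : G → ℝ² having exactly one endpoint. (Otherwise the distance function from the image of the endpoint would not achieve a maximum on the image of the network: at a farthest point, which is either an interior point of a straight edge, the other end of an edge, or a triple junction with 120-degree angles, maximality is contradicted.) -/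
open Set

noncomputable section

/-!
Let `a` be the image of the unique endpoint and `q = Γ p` a point of the compact image farthest
from `a`. Edges are embedded straight segments, so their interior points are strictly closer to `a`
than one of their ends; hence every preimage of `p` is an end of an edge, and the inner tangent
there points from `q` towards another point of the image, so it has positive inner product with
`a - q`. Summing over the preimages of `p` gives a positive number, which must vanish: if `p` is
the endpoint then `a - q = 0`, and otherwise `p` is a junction, where the inner tangents sum to
zero.
-/

open RealInnerProductSpace Topology

theorem dist_lt_max_of_mem_openSegment {F : Type*} [NormedAddCommGroup F] [NormedSpace ℝ F]
    [StrictConvexSpace ℝ F] {d e y : F} (a : F) (hde : d ≠ e) (hy : y ∈ openSegment ℝ d e) :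
    dist y a < max (dist d a) (dist e a) :=
  Metric.mem_ball.mp <| openSegment_subset_ball_of_ne
    (Metric.mem_closedBall.mpr (le_max_left _ _))
    (Metric.mem_closedBall.mpr (le_max_right _ _)) hde hy

section InnerProductSpace

variable {E : Type*} [NormedAddCommGroup E] [InnerProductSpace ℝ E]

theorem inner_sub_pos_of_dist_le {a q w : E} (hwq : w ≠ q) (h : dist w a ≤ dist q a) :
    0 < ⟪a - q, w - q⟫ := by
  have hexpand : ‖w - a‖ ^ 2 = ‖w - q‖ ^ 2 - 2 * ⟪a - q, w - q⟫ + ‖a - q‖ ^ 2 := by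
    rw [show w - a = (w - q) - (a - q) by abel, norm_sub_sq_real, real_inner_comm]
  have hwq' : 0 < ‖w - q‖ := norm_pos_iff.mpr (sub_ne_zero.mpr hwq)
  rw [dist_eq_norm, dist_eq_norm, ← norm_neg (q - a), neg_sub] at h
  nlinarith [norm_nonneg (w - a), norm_nonneg (a - q)]

theorem lineMap_inner_div_norm_sq_of_mem_segment {b c y : E} (hbc : b ≠ c)
    (hy : y ∈ segment ℝ b c) :
    AffineMap.lineMap b c (⟪y - b, c - b⟫ / ‖c - b‖ ^ 2) = y := by
  obtain ⟨θ, -, rfl⟩ := (segment_eq_image' ℝ b c).subst (motive := (y ∈ ·)) hy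
  have hcb : ‖c - b‖ ^ 2 ≠ 0 := pow_ne_zero 2 (norm_ne_zero_iff.mpr (sub_ne_zero.mpr hbc.symm))
  rw [AffineMap.lineMap_apply_module', add_sub_cancel_left, real_inner_smul_left,
    real_inner_self_eq_norm_sq, mul_div_cancel_right₀ _ hcb, add_comm]

theorem mem_openSegment_of_injOn_of_image_eq_segment {f : ℝ → E} {b c : E}
    (hc : ContinuousOn f (Icc 0 1)) (hinj : InjOn f (Icc 0 1))
    (himg : f '' Icc 0 1 = segment ℝ b c) {t : ℝ} (ht : t ∈ Ioo 0 1) :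
    f t ∈ openSegment ℝ (f 0) (f 1) := by
  have h0 : (0 : ℝ) ∈ Icc (0 : ℝ) 1 := left_mem_Icc.mpr zero_le_one
  have h1 : (1 : ℝ) ∈ Icc (0 : ℝ) 1 := right_mem_Icc.mpr zero_le_one
  have hbc : b ≠ c := by
    rintro rfl
    have hconst : ∀ s ∈ Icc (0 : ℝ) 1, f s = b := fun s hs => by
      simpa only [himg, segment_same, mem_singleton_iff] using mem_image_of_mem f hs
    exact zero_ne_one (hinj h0 h1 ((hconst 0 h0).trans (hconst 1 h1).symm))
  -- Projected onto the line `bc`, `f` becomes injective and continuous, hence strictly monotone.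
  set S : ℝ → ℝ := fun s => ⟪f s - b, c - b⟫ / ‖c - b‖ ^ 2
  have hfS : ∀ s ∈ Icc (0 : ℝ) 1, AffineMap.lineMap b c (S s) = f s := fun s hs =>
    lineMap_inner_div_norm_sq_of_mem_segment hbc (himg ▸ mem_image_of_mem f hs)
  have hSc : ContinuousOn S (Icc 0 1) :=
    ((hc.sub continuousOn_const).inner continuousOn_const).div_const _
  have hSinj : InjOn S (Icc 0 1) := fun s hs s' hs' h =>
    hinj hs hs' (by rw [← hfS s hs, ← hfS s' hs', h])
  have htI : t ∈ Icc (0 : ℝ) 1 := Ioo_subset_Icc_self ht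
  have hSt : S t ∈ openSegment ℝ (S 0) (S 1) := by
    rw [openSegment_eq_Ioo' (hSinj.ne h0 h1 zero_ne_one)]
    rcases hSc.strictMonoOn_of_injOn_Icc' zero_le_one hSinj with hmono | hanti
    · have h0t := hmono h0 htI ht.1
      have ht1 := hmono htI h1 ht.2
      rw [min_eq_left (h0t.trans ht1).le, max_eq_right (h0t.trans ht1).le]
      exact ⟨h0t, ht1⟩
    · have h0t := hanti h0 htI ht.1
      have ht1 := hanti htI h1 ht.2
      rw [min_eq_right (ht1.trans h0t).le, max_eq_left (ht1.trans h0t).le]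
      exact ⟨ht1, h0t⟩
  rw [← hfS t htI, ← hfS 0 h0, ← hfS 1 h1, ← image_openSegment]
  exact mem_image_of_mem _ hSt

theorem HasDerivWithinAt.exists_pos_smul_of_slope_mem_ray {f : ℝ → E} {f' w : E} {s : Set ℝ}
    {e : ℝ} (hf : HasDerivWithinAt f f' s e) [(𝓝[s \ {e}] e).NeBot] (hf' : f' ≠ 0)
    (hslope : ∀ x ∈ s \ {e}, ∃ ρ : ℝ, 0 ≤ ρ ∧ slope f e x = ρ • w) :
    ∃ r : ℝ, 0 < r ∧ f' = r • w := by
  -- the closed half-line `{ρ • w | 0 ≤ ρ}`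
  set ray : Set E := {y | (⟪y, w⟫ / ‖w‖ ^ 2) • w = y} ∩ {y | 0 ≤ ⟪y, w⟫}
  have hray_closed : IsClosed ray :=
    (isClosed_eq (by fun_prop) continuous_id).inter (isClosed_le continuous_const (by fun_prop))
  have hmem_ray : ∀ ρ : ℝ, 0 ≤ ρ → ρ • w ∈ ray := by
    intro ρ hρ
    rcases eq_or_ne w 0 with rfl | hw
    · simp [ray]
    · have hw2 : ‖w‖ ^ 2 ≠ 0 := pow_ne_zero 2 (norm_ne_zero_iff.mpr hw)
      refine ⟨?_, ?_⟩ <;> rw [mem_ofPred_eq, real_inner_smul_left, real_inner_self_eq_norm_sq]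
      · rw [mul_div_cancel_right₀ _ hw2]
      · positivity
  have hf'_ray : f' ∈ ray := hray_closed.mem_of_tendsto (hasDerivWithinAt_iff_tendsto_slope.mp hf)
    (eventually_nhdsWithin_of_forall fun x hx => by
      obtain ⟨ρ, hρ, hx⟩ := hslope x hx
      exact hx ▸ hmem_ray ρ hρ)
  refine ⟨_, (div_nonneg hf'_ray.2 (sq_nonneg _)).lt_of_ne fun h => hf' ?_, hf'_ray.1.symm⟩
  rw [← hf'_ray.1, ← h, zero_smul]

theorem exists_pos_smul_derivWithin_Icc_of_mapsTo_segment {f : ℝ → E}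
    (hf : DifferentiableOn ℝ f (Icc 0 1)) (hseg : MapsTo f (Icc 0 1) (segment ℝ (f 0) (f 1)))
    {e : ℝ} (he : e = 0 ∨ e = 1) (hd : derivWithin f (Icc 0 1) e ≠ 0) :
    ∃ r : ℝ, 0 < r ∧ derivWithin f (Icc 0 1) e = r • (f 1 - f 0) := by
  have hseg' : ∀ x ∈ Icc (0 : ℝ) 1, ∃ u : ℝ, 0 ≤ u ∧ u ≤ 1 ∧ f x = f 0 + u • (f 1 - f 0) :=
    fun x hx => by
      obtain ⟨u, hu, hux⟩ := (segment_eq_image' ℝ (f 0) (f 1)).subst (motive := (f x ∈ ·)) (hseg hx)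
      exact ⟨u, hu.1, hu.2, hux.symm⟩
  rcases he with rfl | rfl
  · have hder := (hf 0 (left_mem_Icc.mpr zero_le_one)).hasDerivWithinAt
    have : (𝓝[Icc (0 : ℝ) 1 \ {0}] 0).NeBot := by
      rw [Icc_sdiff_left]; exact left_nhdsWithin_Ioc_neBot zero_lt_one
    refine hder.exists_pos_smul_of_slope_mem_ray hd fun x hx => ?_
    obtain ⟨u, hu, -, hux⟩ := hseg' x hx.1
    refine ⟨x⁻¹ * u, mul_nonneg (inv_nonneg.mpr hx.1.1) hu, ?_⟩
    rw [slope_def_module, hux, add_sub_cancel_left, sub_zero, smul_smul]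
  · have hder := (hf 1 (right_mem_Icc.mpr zero_le_one)).hasDerivWithinAt
    have : (𝓝[Icc (0 : ℝ) 1 \ {1}] 1).NeBot := by
      rw [Icc_sdiff_right]; exact right_nhdsWithin_Ico_neBot zero_lt_one
    refine hder.exists_pos_smul_of_slope_mem_ray hd fun x hx => ?_
    obtain ⟨u, -, hu, hux⟩ := hseg' x hx.1
    refine ⟨(x - 1)⁻¹ * (u - 1),
      mul_nonneg_of_nonpos_of_nonpos (inv_nonpos.mpr (by linarith [hx.1.2])) (by linarith), ?_⟩
    rw [slope_def_module, hux, ← smul_smul, sub_smul, one_smul]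
    congr 1
    abel

end InnerProductSpace

namespace TopGraph

variable {N : ℕ}

theorem finite_setOf_isVertexPoint : {x : unitInterval × Fin N | IsVertexPoint x}.Finite :=
  ((finite_singleton 0).insert 1 |>.prod finite_univ).subset fun _ hx =>
    ⟨hx.symm.imp id id, mem_univ _⟩

end TopGraph

namespace Network.IsMinimal

variable {N : ℕ} {G : TopGraph N} {Γ : Network N G}

theorem edge_zero_ne_edge_one (hmin : Γ.IsMinimal) (j : Fin N) : Γ.edge j 0 ≠ Γ.edge j 1 :=
  fun h => zero_ne_one (hmin.embed j (left_mem_Icc.mpr zero_le_one)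
    (right_mem_Icc.mpr zero_le_one) h)

theorem edge_mem_openSegment (hmin : Γ.IsMinimal) (j : Fin N) {t : ℝ} (ht : t ∈ Ioo 0 1) :
    Γ.edge j t ∈ openSegment ℝ (Γ.edge j 0) (Γ.edge j 1) :=
  have ⟨_, _, _, himg⟩ := hmin.straight j
  mem_openSegment_of_injOn_of_image_eq_segment (Γ.edge_smooth j).continuousOn (hmin.embed j)
    himg ht

theorem mapsTo_edge_segment (hmin : Γ.IsMinimal) (j : Fin N) :
    MapsTo (Γ.edge j) (Icc 0 1) (segment ℝ (Γ.edge j 0) (Γ.edge j 1)) := by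
  intro t ht
  rcases ht.1.eq_or_lt with rfl | h0
  · exact left_mem_segment ℝ _ _
  rcases ht.2.eq_or_lt with rfl | h1
  · exact right_mem_segment ℝ _ _
  exact openSegment_subset_segment ℝ _ _ (hmin.edge_mem_openSegment j ⟨h0, h1⟩)

theorem exists_innerTangent_eq_pos_smul (hmin : Γ.IsMinimal) {x : unitInterval × Fin N}
    (hx : TopGraph.IsVertexPoint x) :
    ∃ (r : ℝ) (t : unitInterval), 0 < r ∧ Γ.edge x.2 t ≠ Γ.edge x.2 x.1 ∧
      Γ.innerTangent x = r • (Γ.edge x.2 t - Γ.edge x.2 x.1) := by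
  obtain ⟨t, j⟩ := x
  have hdiff := (Γ.edge_smooth j).differentiableOn one_ne_zero
  have hne := hmin.edge_zero_ne_edge_one j
  rcases hx with rfl | rfl
  · have hd := Γ.edge_immersed j 0 (left_mem_Icc.mpr zero_le_one)
    obtain ⟨r, hr, hdr⟩ := exists_pos_smul_derivWithin_Icc_of_mapsTo_segment hdiff
      (hmin.mapsTo_edge_segment j) (Or.inl rfl) hd
    refine ⟨‖derivWithin (Γ.edge j) (Icc 0 1) 0‖⁻¹ * r, 1,
      mul_pos (inv_pos.mpr (norm_pos_iff.mpr hd)) hr, hne.symm, ?_⟩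
    simp only [Network.innerTangent, Set.Icc.coe_zero, Set.Icc.coe_one, if_pos]
    rw [hdr, smul_smul]
  · have hd := Γ.edge_immersed j 1 (right_mem_Icc.mpr zero_le_one)
    obtain ⟨r, hr, hdr⟩ := exists_pos_smul_derivWithin_Icc_of_mapsTo_segment hdiff
      (hmin.mapsTo_edge_segment j) (Or.inr rfl) hd
    refine ⟨‖derivWithin (Γ.edge j) (Icc 0 1) 1‖⁻¹ * r, 0,
      mul_pos (inv_pos.mpr (norm_pos_iff.mpr hd)) hr, hne, ?_⟩
    simp only [Network.innerTangent, Set.Icc.coe_zero, Set.Icc.coe_one, one_ne_zero, if_false]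
    rw [hdr, smul_smul, ← smul_neg, neg_sub]

theorem isVertexPoint_of_forall_dist_le (hmin : Γ.IsMinimal) {a : Plane} {p : G.space}
    (hp : ∀ p', dist (Γ.toFun p') a ≤ dist (Γ.toFun p) a) {x : unitInterval × Fin N}
    (hx : x ∈ G.fiber p) : TopGraph.IsVertexPoint x := by
  obtain ⟨t, j⟩ := x
  by_contra hnv
  simp only [TopGraph.IsVertexPoint, not_or] at hnv
  have ht : (t : ℝ) ∈ Ioo 0 1 :=
    ⟨unitInterval.pos_iff_ne_zero.mpr hnv.1, unitInterval.lt_one_iff_ne_one.mpr hnv.2⟩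
  have hedge : ∀ s : unitInterval, dist (Γ.edge j s) a ≤ dist (Γ.toFun p) a := fun s =>
    Γ.edge_eq j s ▸ hp _
  have hlt := dist_lt_max_of_mem_openSegment a (hmin.edge_zero_ne_edge_one j)
    (hmin.edge_mem_openSegment j ht)
  rw [Γ.edge_eq j t, show G.proj (t, j) = p from hx] at hlt
  exact hlt.not_ge (max_le (hedge 0) (hedge 1))

theorem inner_innerTangent_pos_of_forall_dist_le (hmin : Γ.IsMinimal) {a : Plane} {p : G.space}
    (hp : ∀ p', dist (Γ.toFun p') a ≤ dist (Γ.toFun p) a) {x : unitInterval × Fin N}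
    (hx : x ∈ G.fiber p) : 0 < ⟪a - Γ.toFun p, Γ.innerTangent x⟫ := by
  obtain ⟨r, t, hr, hne, hT⟩ :=
    hmin.exists_innerTangent_eq_pos_smul (hmin.isVertexPoint_of_forall_dist_le hp hx)
  have hq : Γ.edge x.2 x.1 = Γ.toFun p := (Γ.edge_eq _ _).trans (congrArg Γ.toFun hx)
  rw [hT, real_inner_smul_right, ← hq]
  refine mul_pos hr (inner_sub_pos_of_dist_le hne ?_)
  rw [hq, Γ.edge_eq]
  exact hp _

end Network.IsMinimal

/-- There is no minimal network with exactly one endpoint. -/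
theorem no_minimal_network_with_one_endpoint {N : ℕ} {G : TopGraph N}
    (Γ : Network N G) (hmin : Γ.IsMinimal) :
    {p : G.space | G.IsEndpoint p}.ncard ≠ 1 := by
  intro hcard
  obtain ⟨p₀, hp₀⟩ := ncard_eq_one.mp hcard
  set a := Γ.toFun p₀
  obtain ⟨p, -, hp⟩ := isCompact_univ.exists_isMaxOn ⟨p₀, mem_univ _⟩
    (Γ.continuous_toFun.dist (continuous_const (y := a))).continuousOn
  rw [isMaxOn_univ_iff] at hp
  obtain ⟨x₀, hx₀⟩ : (G.fiber p).Nonempty := Quotient.exists_rep p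
  have hvert : G.fiber p ⊆ {x | TopGraph.IsVertexPoint x} := fun x hx =>
    hmin.isVertexPoint_of_forall_dist_le hp hx
  have hfin : (G.fiber p).Finite := TopGraph.finite_setOf_isVertexPoint.subset hvert
  have hpos : 0 < ∑ᶠ x ∈ G.fiber p, ⟪a - Γ.toFun p, Γ.innerTangent x⟫ :=
    finsum_cond_pos (fun x hx => (hmin.inner_innerTangent_pos_of_forall_dist_le hp hx).le)
      ⟨x₀, hx₀, hmin.inner_innerTangent_pos_of_forall_dist_le hp hx₀⟩
      (hfin.subset inter_subset_right)
  refine hpos.ne' ?_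
  obtain hend | hjunc : (G.fiber p).ncard = 1 ∨ 2 ≤ (G.fiber p).ncard := by
    have := (ncard_pos hfin).mpr ⟨x₀, hx₀⟩
    omega
  · have : p = p₀ := eq_of_mem_singleton (hp₀ ▸ ⟨hvert, hend⟩)
    simp only [this, a, sub_self, inner_zero_left, finsum_zero]
  · have := (innerₛₗ ℝ (a - Γ.toFun p)).toAddMonoidHom.map_finsum_mem Γ.innerTangent hfin
    simpa only [hmin.balanced p ⟨hvert, hjunc⟩, LinearMap.toAddMonoidHom_coe, innerₛₗ_apply_apply,
      inner_zero_right] using this.symm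
end
end

section
/- Let G be a connected simple graph and let a₁, a₂, a₃ be three distinct vertices of G. Then there exists a permutation (i, j, k) of (1, 2, 3) such that there exist a path in G from aᵢ to aⱼ not passing through aₖ, and a path in G from aᵢ to aₖ not passing through aⱼ. -/
/-!
Take a path `P` from `a 1` to `a 2`. If it passes through `a 0`, cutting it there gives the two
paths out of `a 0`. Otherwise take a path `Q` from `a 0` to `a 1`: if it passes through `a 2`,
cutting it there gives the two paths out of `a 2`; if not, `Q` reversed and `P` are the two
paths out of `a 1`.
-/

namespace SimpleGraph

variable {V : Type*} {G : SimpleGraph V} {u v w x y z : V}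

def HasPathAvoiding (G : SimpleGraph V) (x y z : V) : Prop :=
  ∃ p : G.Walk x y, p.IsPath ∧ z ∉ p.support

theorem HasPathAvoiding.symm (h : G.HasPathAvoiding x y z) : G.HasPathAvoiding y x z := by
  obtain ⟨p, hp, hz⟩ := h
  exact ⟨p.reverse, hp.reverse, by rwa [Walk.support_reverse, List.mem_reverse]⟩

theorem Walk.IsPath.hasPathAvoiding_takeUntil [DecidableEq V] {p : G.Walk u v} (hp : p.IsPath)
    (hw : w ∈ p.support) (hvw : v ≠ w) : G.HasPathAvoiding u w v :=
  ⟨p.takeUntil w hw, hp.takeUntil hw, Walk.endpoint_notMem_support_takeUntil hp hw hvw⟩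

theorem Walk.IsPath.hasPathAvoiding_of_mem_support {p : G.Walk u v} (hp : p.IsPath)
    (hw : w ∈ p.support) (huw : u ≠ w) (hvw : v ≠ w) :
    G.HasPathAvoiding w u v ∧ G.HasPathAvoiding w v u := by
  classical
  exact ⟨(hp.hasPathAvoiding_takeUntil hw hvw).symm,
    (hp.reverse.hasPathAvoiding_takeUntil (by simpa using hw) huw).symm⟩

theorem Preconnected.hasPathAvoiding_pair (hconn : G.Preconnected)
    (hxy : x ≠ y) (hxz : x ≠ z) (hyz : y ≠ z) :
    (G.HasPathAvoiding x y z ∧ G.HasPathAvoiding x z y) ∨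
      (G.HasPathAvoiding z x y ∧ G.HasPathAvoiding z y x) ∨
      (G.HasPathAvoiding y x z ∧ G.HasPathAvoiding y z x) := by
  obtain ⟨P, hP⟩ := hconn.exists_isPath y z
  by_cases hxP : x ∈ P.support
  · exact .inl (hP.hasPathAvoiding_of_mem_support hxP hxy.symm hxz.symm)
  obtain ⟨Q, hQ⟩ := hconn.exists_isPath x y
  by_cases hzQ : z ∈ Q.support
  · exact .inr (.inl (hQ.hasPathAvoiding_of_mem_support hzQ hxz hyz))
  · exact .inr (.inr ⟨HasPathAvoiding.symm ⟨Q, hQ, hzQ⟩, ⟨P, hP, hxP⟩⟩)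

end SimpleGraph

/-- In a connected simple graph, given three distinct vertices
`a 0, a 1, a 2`, there is a permutation `(i, j, k)` of `(0, 1, 2)` such that there are a
path from `a i` to `a j` avoiding `a k` and a path from `a i` to `a k` avoiding `a j`. -/
theorem exists_two_paths_avoiding_third {V : Type*} (G : SimpleGraph V)
    (hconn : G.Connected) (a : Fin 3 → V) (hinj : Function.Injective a) :
    ∃ σ : Equiv.Perm (Fin 3),
      (∃ p : G.Walk (a (σ 0)) (a (σ 1)), p.IsPath ∧ a (σ 2) ∉ p.support) ∧
      (∃ q : G.Walk (a (σ 0)) (a (σ 2)), q.IsPath ∧ a (σ 1) ∉ q.support) := by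
  rcases hconn.preconnected.hasPathAvoiding_pair (hinj.ne (by decide : (0 : Fin 3) ≠ 1))
      (hinj.ne (by decide : (0 : Fin 3) ≠ 2)) (hinj.ne (by decide : (1 : Fin 3) ≠ 2))
    with h | h | h
  · exact ⟨1, h⟩
  · exact ⟨(finRotate 3).symm, h⟩
  · exact ⟨Equiv.swap 0 1, h⟩
end
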